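/- arXiv:1005.1415 — 7 statements merged into one kernel-verified Lean document; each statement's English description precedes it below -/
import Mathlib

section
/- Let A be a unique factorization domain and N = Ae₁ ⊕ … ⊕ Aeₙ a free A-module of finite rank n. Then for every submodule M ⊆ N of rank one there exist an ideal I ⊆ A and a reduced element m₀ ∈ N such that M = I·m₀ = { a·m₀ : a ∈ I }. -/
/-- An element `x` of a free module is *reduced* if whenever `x = a • x'`,
the scalar `a` is a unit. -/
def IsReducedElem {A N : Type*} [CommRing A] [AddCommGroup N] [Module A N] (x : N) : Prop :=
  ∀ (a : A) (x' : N), x = a • x' → IsUnit a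

/-!
Pick a nonzero `x ∈ M` and divide out the gcd of its coordinates: `x = g • m₀` where the
coordinates of `m₀` have gcd `1`, which makes `m₀` reduced. For `y ∈ M`, rank one gives
`d • y = r • m₀` with `d ≠ 0`; then `d` divides `r` times every coordinate of `m₀`, hence `r`
itself, so `y` is a multiple of `m₀`. Hence `M = I • m₀` for `I = {a | a • m₀ ∈ M}`.
-/

theorem exists_smul_eq_smul_of_smul_add_smul_eq_zero {R M : Type*} [Ring R] [IsDomain R]
    [AddCommGroup M] [Module R M] [Module.IsTorsionFree R M] {x y : M} (hx : x ≠ 0)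
    (h : ∃ c d : R, (c ≠ 0 ∨ d ≠ 0) ∧ c • x + d • y = 0) :
    ∃ d r : R, d ≠ 0 ∧ d • y = r • x := by
  obtain ⟨c, d, hcd, hsum⟩ := h
  have hd : d ≠ 0 := by
    rintro rfl
    rw [zero_smul, add_zero, smul_eq_zero] at hsum
    tauto
  exact ⟨d, -c, hd, by rw [neg_smul, eq_neg_iff_add_eq_zero, add_comm, hsum]⟩

theorem Submodule.coe_eq_setOf_smul_of_forall_mem_eq_smul {R M : Type*} [Semiring R]
    [AddCommMonoid M] [Module R M] {P : Submodule R M} {m₀ : M}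
    (h : ∀ y ∈ P, ∃ k : R, k • m₀ = y) :
    (P : Set M) = {m | ∃ a ∈ P.comap (LinearMap.toSpanSingleton R M m₀), a • m₀ = m} := by
  ext y
  constructor
  · intro hy
    obtain ⟨k, rfl⟩ := h y hy
    exact ⟨k, hy, rfl⟩
  · rintro ⟨a, ha, rfl⟩
    exact ha

namespace Module.Basis

variable {ι A N : Type*} [Fintype ι] [CommRing A] [NormalizedGCDMonoid A] [AddCommGroup N]
  [Module A N] (e : Basis ι A N)

theorem isReducedElem_of_gcd_repr_eq_one {m : N} (hm : Finset.univ.gcd (e.repr m) = 1) :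
    IsReducedElem (A := A) m := by
  intro a x' h
  have ha : a ∣ Finset.univ.gcd (e.repr m) :=
    Finset.dvd_gcd fun i _ => ⟨e.repr x' i, by simp [h]⟩
  exact isUnit_of_dvd_one (hm ▸ ha)

theorem exists_eq_smul_gcd_repr_eq_one [IsDomain A] {x : N} (hx : x ≠ 0) :
    ∃ (g : A) (m₀ : N), x = g • m₀ ∧ Finset.univ.gcd (e.repr m₀) = 1 := by
  have hι : (Finset.univ : Finset ι).Nonempty := by
    by_contra hempty
    rw [Finset.not_nonempty_iff_eq_empty, Finset.univ_eq_empty_iff] at hempty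
    exact hx (e.repr.injective (Subsingleton.elim _ _))
  obtain ⟨b, hb, hb1⟩ := Finset.univ.extract_gcd (e.repr x) hι
  have hrepr : ⇑(e.repr (e.equivFun.symm b)) = b :=
    (e.equivFun_apply _).symm.trans (e.equivFun.apply_symm_apply b)
  refine ⟨Finset.univ.gcd (e.repr x), e.equivFun.symm b, e.repr.injective ?_,
    by rw [hrepr]; exact hb1⟩
  ext i
  rw [map_smul, Finsupp.smul_apply, smul_eq_mul, congrFun hrepr i]
  exact hb i (Finset.mem_univ i)

theorem dvd_of_smul_eq_smul_of_gcd_repr_eq_one {m y : N} {d r : A}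
    (hm : Finset.univ.gcd (e.repr m) = 1) (h : d • y = r • m) : d ∣ r := by
  have hdvd : d ∣ Finset.univ.gcd fun i => r * e.repr m i :=
    Finset.dvd_gcd fun i _ => ⟨e.repr y i, by simpa using (congr_arg (e.repr · i) h).symm⟩
  rwa [(Finset.gcd_mul_left' _ _ r).dvd_iff_dvd_right, hm, mul_one] at hdvd

theorem exists_smul_eq_of_smul_eq_smul [IsDomain A] {m y : N} {d r : A} (hd : d ≠ 0)
    (hm : Finset.univ.gcd (e.repr m) = 1) (h : d • y = r • m) : ∃ k : A, k • m = y := by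
  have := Module.Free.of_basis e
  obtain ⟨k, rfl⟩ := e.dvd_of_smul_eq_smul_of_gcd_repr_eq_one hm h
  exact ⟨k, (smul_right_inj hd).mp (by rw [h, mul_smul])⟩

end Module.Basis

/-- Lemma 1 (existence part): over a UFD `A`, every rank-one submodule `M` of a free
`A`-module `N` of finite rank has the form `I • m₀` for an ideal `I ⊆ A` and a reduced
element `m₀ ∈ N`. -/
theorem rank_one_submodule_eq_ideal_smul_reduced
    (A : Type*) [CommRing A] [IsDomain A] [UniqueFactorizationMonoid A]
    (n : ℕ) (N : Type*) [AddCommGroup N] [Module A N] (e : Module.Basis (Fin n) A N)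
    (M : Submodule A N) (hM : M ≠ ⊥)
    (hrank : ∀ x ∈ M, ∀ y ∈ M, ∃ c d : A, (c ≠ 0 ∨ d ≠ 0) ∧ c • x + d • y = 0) :
    ∃ (I : Ideal A) (m₀ : N), IsReducedElem (A := A) m₀ ∧
      (M : Set N) = {m : N | ∃ a ∈ I, a • m₀ = m} := by
  obtain ⟨_⟩ : Nonempty (NormalizedGCDMonoid A) := inferInstance
  have := Module.Free.of_basis e
  obtain ⟨x, hxM, hx0⟩ := (Submodule.ne_bot_iff M).mp hM
  obtain ⟨g, m₀, rfl, hm₀⟩ := e.exists_eq_smul_gcd_repr_eq_one hx0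
  refine ⟨M.comap (LinearMap.toSpanSingleton A N m₀), m₀, e.isReducedElem_of_gcd_repr_eq_one hm₀,
    Submodule.coe_eq_setOf_smul_of_forall_mem_eq_smul fun y hyM => ?_⟩
  obtain ⟨d, r, hd, hdy⟩ := exists_smul_eq_smul_of_smul_add_smul_eq_zero hx0 (hrank _ hxM y hyM)
  exact e.exists_smul_eq_of_smul_eq_smul hd hm₀ (hdy.trans (smul_smul r g m₀))
end

section
/- Let L be a Lie subalgebra of Wₙ(K) which is also a K[X]-submodule of rank one of the K[X]-module Wₙ(K). Then the centralizer C_L(x) = { y ∈ L : [x,y] = 0 } of any nonzero element x ∈ L is an abelian Lie subalgebra of L. -/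
/-!
Over the fraction field every `y ∈ L` is a multiple `a • x` of the fixed `x ≠ 0`, and
`[x, a • x] = x(a) • x` shows that `y` centralizes `x` exactly when `x(a) = 0`. Then
`[a • x, b • x] = (a x(b) - b x(a)) • x = 0`. Clearing denominators, `d • y = e • x` and
`d' • z = e' • x` give `(d d') • [y, z] = 0`, and derivations of a domain form a torsion-free
module.
-/

namespace Derivation

instance instIsTorsionFree {R A M : Type*} [CommSemiring R] [CommSemiring A] [Algebra R A]
    [AddCommMonoid M] [Module A M] [Module R M] [IsScalarTower R A M] [Module.IsTorsionFree A M] :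
    Module.IsTorsionFree A (Derivation R A M) :=
  DFunLike.coe_injective.moduleIsTorsionFree _ fun _ _ => rfl

variable {R A : Type*} [CommRing R] [CommRing A] [Algebra R A]

theorem commutator_smul_right (a : A) (D₁ D₂ : Derivation R A A) :
    ⁅D₁, a • D₂⁆ = a • ⁅D₁, D₂⁆ + D₁ a • D₂ := by
  ext f
  simp only [commutator_apply, add_apply, smul_apply, smul_eq_mul, leibniz]
  ring

theorem apply_smul_eq_apply_smul_of_commutator_eq_zero {x z : Derivation R A A} {d e : A}
    (hz : d • z = e • x) (hxz : ⁅x, z⁆ = 0) : x d • z = x e • x := by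
  have h := congrArg (⁅x, ·⁆) hz
  simpa only [commutator_smul_right, hxz, lie_self, smul_zero, zero_add] using h

theorem smul_commutator_eq_zero {x y z : Derivation R A A} {d e d' e' : A}
    (hy : d • y = e • x) (hz : d' • z = e' • x) (hxy : ⁅x, y⁆ = 0) (hxz : ⁅x, z⁆ = 0) :
    (d * d') • ⁅y, z⁆ = 0 := by
  have hye : d * y e' = e * x e' := by simpa using congrArg (· e') hy
  have hyd : d * y d' = e * x d' := by simpa using congrArg (· d') hy
  have hyx : ⁅y, x⁆ = 0 := by rw [← lie_skew, hxy, neg_zero]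
  calc (d * d') • ⁅y, z⁆
      = d • (⁅y, d' • z⁆ - y d' • z) := by
        rw [commutator_smul_right, add_sub_cancel_right, mul_smul]
    _ = (d * y e') • x - (d * y d') • z := by
        rw [hz, commutator_smul_right, hyx, smul_zero, zero_add, smul_sub, smul_smul, smul_smul]
    _ = e • (x e' • x - x d' • z) := by rw [hye, hyd, smul_sub, mul_smul, mul_smul]
    _ = 0 := by rw [apply_smul_eq_apply_smul_of_commutator_eq_zero hz hxz, sub_self, smul_zero]

end Derivation

theorem exists_smul_eq_smul_of_ne_zero {A M : Type*} [CommRing A] [IsDomain A] [AddCommGroup M]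
    [Module A M] [Module.IsTorsionFree A M] {x y : M} (hx : x ≠ 0)
    (h : ∃ c d : A, (c ≠ 0 ∨ d ≠ 0) ∧ c • x + d • y = 0) :
    ∃ d e : A, d ≠ 0 ∧ d • y = e • x := by
  obtain ⟨c, d, hcd, hdep⟩ := h
  refine ⟨d, -c, fun hd => ?_, by rw [neg_smul, ← sub_eq_zero, sub_neg_eq_add, add_comm, hdep]⟩
  subst hd
  rw [zero_smul, add_zero, smul_eq_zero_iff_left hx] at hdep
  exact hcd.elim (· hdep) (· rfl)

theorem centralizer_abelian_of_rank_one_general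
    (K : Type*) [Field K] (n : ℕ)
    (L : Submodule (MvPolynomial (Fin n) K)
      (Derivation K (MvPolynomial (Fin n) K) (MvPolynomial (Fin n) K)))
    (hrank : ∀ x ∈ L, ∀ y ∈ L, ∃ c d : MvPolynomial (Fin n) K,
      (c ≠ 0 ∨ d ≠ 0) ∧ c • x + d • y = 0)
    (x : Derivation K (MvPolynomial (Fin n) K) (MvPolynomial (Fin n) K))
    (hx : x ∈ L) (hx0 : x ≠ 0) :
    ∀ y ∈ L, ∀ z ∈ L, ⁅x, y⁆ = 0 → ⁅x, z⁆ = 0 → ⁅y, z⁆ = 0 := by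
  intro y hy z hz hxy hxz
  obtain ⟨d, e, hd, hye⟩ := exists_smul_eq_smul_of_ne_zero hx0 (hrank x hx y hy)
  obtain ⟨d', e', hd', hze⟩ := exists_smul_eq_smul_of_ne_zero hx0 (hrank x hx z hz)
  exact (smul_eq_zero_iff_right (mul_ne_zero hd hd')).mp
    (Derivation.smul_commutator_eq_zero hye hze hxy hxz)

/-- Proposition 1: if `L ⊆ Wₙ(K)` is a Lie subalgebra which is a rank-one `K[X]`-submodule
of `Wₙ(K)`, then the centralizer of every nonzero element of `L` is abelian. -/
theorem centralizer_abelian_of_rank_one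
    (K : Type*) [Field K] [IsAlgClosed K] [CharZero K] (n : ℕ)
    (L : Submodule (MvPolynomial (Fin n) K)
      (Derivation K (MvPolynomial (Fin n) K) (MvPolynomial (Fin n) K)))
    (hLie : ∀ x ∈ L, ∀ y ∈ L, ⁅x, y⁆ ∈ L)
    (hL : L ≠ ⊥)
    (hrank : ∀ x ∈ L, ∀ y ∈ L, ∃ c d : MvPolynomial (Fin n) K,
      (c ≠ 0 ∨ d ≠ 0) ∧ c • x + d • y = 0)
    (x : Derivation K (MvPolynomial (Fin n) K) (MvPolynomial (Fin n) K))
    (hx : x ∈ L) (hx0 : x ≠ 0) :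
    ∀ y ∈ L, ∀ z ∈ L, ⁅x, y⁆ = 0 → ⁅x, z⁆ = 0 → ⁅y, z⁆ = 0 :=
  centralizer_abelian_of_rank_one_general K n L hrank x hx hx0
end

section
/- Let F be a finite-dimensional solvable nonabelian Lie algebra over an algebraically closed field K of characteristic zero such that the centralizer of every nonzero element of F is abelian. Then F contains an abelian ideal A of codimension one (so F = A ⋊ ⟨b⟩ for any b ∈ F \ A), and the center of F is trivial. -/
/-!
By Lie's theorem the solvable algebra `F` has a common eigenvector `a ≠ 0` for its adjoint
action, say `⁅x, a⁆ = χ x • a`. The weight `χ` kills all brackets, so its kernel is an ideal; the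
kernel lies in the centralizer of `a` and is therefore abelian. Finally `χ ≠ 0`, since otherwise
`a` would be central, and a nonzero central element has all of `F` as its (abelian) centralizer.
-/

open LieModule

lemma LieModule.apply_lie_eq_zero_of_mem_weightSpace {R L M : Type*} [CommRing R] [IsDomain R]
    [LieRing L] [LieAlgebra R L] [AddCommGroup M] [Module R M] [Module.IsTorsionFree R M]
    [LieRingModule L M] [LieModule R L M] {χ : Module.Dual R L} {v : M}
    (hv : v ∈ weightSpace M χ) (hv0 : v ≠ 0) (x y : L) : χ ⁅x, y⁆ = 0 := by
  rw [mem_weightSpace] at hv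
  have : χ ⁅x, y⁆ • v = 0 := by
    rw [← hv, lie_lie, hv y, hv x, lie_smul, lie_smul, hv, hv, smul_smul, smul_smul, mul_comm,
      sub_self]
  exact (smul_eq_zero.mp this).resolve_right hv0

def Module.Dual.lieIdealKer {R L : Type*} [CommRing R] [LieRing L] [LieAlgebra R L]
    (χ : Module.Dual R L) (hχ : ∀ x y : L, χ ⁅x, y⁆ = 0) : LieIdeal R L where
  toSubmodule := LinearMap.ker χ
  lie_mem {x m} _ := hχ x m

lemma Module.Dual.exists_mem_ker_eq_add_smul {K V : Type*} [Field K] [AddCommGroup V]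
    [Module K V] (χ : Module.Dual K V) {b : V} (hb : χ b ≠ 0) (x : V) :
    ∃ a ∈ LinearMap.ker χ, ∃ c : K, x = a + c • b := by
  refine ⟨x - (χ x / χ b) • b, ?_, χ x / χ b, (sub_add_cancel _ _).symm⟩
  rw [LinearMap.mem_ker, map_sub, map_smul, smul_eq_mul, div_mul_cancel₀ _ hb, sub_self]

def HasAbelianCentralizers (F : Type*) [LieRing F] : Prop :=
  ∀ x : F, x ≠ 0 → ∀ y z : F, ⁅x, y⁆ = 0 → ⁅x, z⁆ = 0 → ⁅y, z⁆ = 0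

namespace HasAbelianCentralizers

variable {F : Type*} [LieRing F] (hF : HasAbelianCentralizers F)
include hF

lemma eq_zero_of_forall_lie_eq_zero (hnonab : ¬ ∀ x y : F, ⁅x, y⁆ = 0) {z : F}
    (hz : ∀ y : F, ⁅z, y⁆ = 0) : z = 0 := by
  by_contra hz0
  exact hnonab fun x y => hF z hz0 x y (hz x) (hz y)

variable {K : Type*} [CommRing K] [LieAlgebra K F] {χ : Module.Dual K F} {a : F}

lemma lie_eq_zero_of_apply_eq_zero (ha : a ∈ weightSpace F χ) (ha0 : a ≠ 0) {y z : F}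
    (hy : χ y = 0) (hz : χ z = 0) : ⁅y, z⁆ = 0 := by
  rw [mem_weightSpace] at ha
  have hcomm {w : F} (hw : χ w = 0) : ⁅a, w⁆ = 0 := by
    rw [← lie_skew, ha, hw, zero_smul, neg_zero]
  exact hF a ha0 y z (hcomm hy) (hcomm hz)

lemma weight_ne_zero (hnonab : ¬ ∀ x y : F, ⁅x, y⁆ = 0) (ha : a ∈ weightSpace F χ)
    (ha0 : a ≠ 0) : χ ≠ 0 := by
  rintro rfl
  refine ha0 (hF.eq_zero_of_forall_lie_eq_zero hnonab fun y => ?_)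
  rw [← lie_skew, (mem_weightSpace _ _).mp ha y, LinearMap.zero_apply, zero_smul, neg_zero]

end HasAbelianCentralizers

/-- Case 1 of Proposition 2: a finite-dimensional solvable nonabelian Lie algebra with all
centralizers of nonzero elements abelian has an abelian ideal `A` of codimension one
(so `F = A ⋊ ⟨b⟩` for any `b ∉ A`) and trivial center. -/
theorem solvable_case_abelian_centralizers
    (K F : Type*) [Field K] [IsAlgClosed K] [CharZero K]
    [LieRing F] [LieAlgebra K F] [FiniteDimensional K F]
    [LieAlgebra.IsSolvable F]
    (hnonab : ¬ ∀ x y : F, ⁅x, y⁆ = 0)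
    (hcent : ∀ x : F, x ≠ 0 → ∀ y z : F, ⁅x, y⁆ = 0 → ⁅x, z⁆ = 0 → ⁅y, z⁆ = 0) :
    (∃ A : LieIdeal K F, IsLieAbelian A ∧
        Module.finrank K A + 1 = Module.finrank K F ∧
        ∀ b : F, b ∉ A → ∀ x : F, ∃ a ∈ A, ∃ c : K, x = a + c • b) ∧
      ∀ z : F, (∀ y : F, ⁅z, y⁆ = 0) → z = 0 := by
  have hF : HasAbelianCentralizers F := hcent
  have : Nontrivial F := by
    by_contra! h
    exact hnonab fun x y => Subsingleton.elim _ _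
  obtain ⟨χ, hχ⟩ := exists_nontrivial_weightSpace_of_isSolvable K F F
  obtain ⟨⟨a, ha⟩, ha0⟩ := exists_ne (0 : weightSpace F χ)
  replace ha0 : a ≠ 0 := fun h => ha0 (Subtype.ext h)
  let A := χ.lieIdealKer (apply_lie_eq_zero_of_mem_weightSpace ha ha0)
  refine ⟨⟨A, ?_, χ.finrank_ker_add_one_of_ne_zero (hF.weight_ne_zero hnonab ha ha0),
    fun _ hb => χ.exists_mem_ker_eq_add_smul hb⟩,
    fun z => hF.eq_zero_of_forall_lie_eq_zero hnonab⟩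
  rw [LieSubmodule.lie_abelian_iff_lie_self_eq_bot, LieSubmodule.lie_eq_bot_iff]
  exact fun y hy z hz => hF.lie_eq_zero_of_apply_eq_zero ha ha0 hy hz
end

section
/- Let D be a derivation of the polynomial algebra K[X] = K[x₁,…,xₙ], let λ ∈ K, and let f, g, h ∈ K[X] satisfy h·D(g) − g·D(h) = λg + f, h·D(f) − f·D(h) = λf, and f·D(g) − g·D(f) = 0. Then f = 0. -/
theorem no_jordan_block_general
    (K : Type*) [Field K] (n : ℕ)
    (D : Derivation K (MvPolynomial (Fin n) K) (MvPolynomial (Fin n) K))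
    (lam : K) (f g h : MvPolynomial (Fin n) K)
    (h1 : h * D g - g * D h = MvPolynomial.C lam * g + f)
    (h2 : h * D f - f * D h = MvPolynomial.C lam * f)
    (h3 : f * D g - g * D f = 0) :
    f = 0 := by
  have f_sq : f * f = 0 := by linear_combination g * h2 + h * h3 - f * h1
  exact mul_self_eq_zero.mp f_sq

/-- The computation showing that `ad(b)` has no nontrivial Jordan block: if
`h·D(g) − g·D(h) = λg + f`, `h·D(f) − f·D(h) = λf` and `f·D(g) − g·D(f) = 0`,
then `f = 0`. -/
theorem no_jordan_block
    (K : Type*) [Field K] [IsAlgClosed K] [CharZero K] (n : ℕ)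
    (D : Derivation K (MvPolynomial (Fin n) K) (MvPolynomial (Fin n) K))
    (lam : K) (f g h : MvPolynomial (Fin n) K)
    (h1 : h * D g - g * D h = MvPolynomial.C lam * g + f)
    (h2 : h * D f - f * D h = MvPolynomial.C lam * f)
    (h3 : f * D g - g * D f = 0) :
    f = 0 :=
  no_jordan_block_general K n D lam f g h h1 h2 h3
end

section
/- Let L = q(x)·K[x]·∂/∂x be a polynomial Lie algebra in W₁(K), where q(x) ∈ K[x] has degree at least 2. Then every finite-dimensional Lie subalgebra of L has dimension at most one over K. -/
/-!
Identify a derivation `D` of `K[X]` with `D X`, so that `F` becomes a finite-dimensional space `V`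
of polynomials, all divisible by `q`, closed under the Wronskian `W(p, r) = p r' - p' r`. If
`deg p ≠ deg r` are both positive, the coefficient of `W(p, r)` in degree `deg p + deg r - 1` is
`lc p · lc r · (deg r - deg p) ≠ 0`. Bracketing an element of `V` of degree `2 ≤ m < n` with one of
the maximal degree `n` would thus produce degree `m + n - 1 > n`, so all nonzero elements of `V`
have the same degree, and the leading coefficient embeds `V` into `K`.
-/

open Polynomial Module

namespace Polynomial

variable {R : Type*} [CommRing R]

theorem coeff_wronskian_natDegree_add_sub_one {p r : R[X]} (hp : p.natDegree ≠ 0)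
    (hr : r.natDegree ≠ 0) :
    (wronskian p r).coeff (p.natDegree + r.natDegree - 1) =
      p.leadingCoeff * r.leadingCoeff * (r.natDegree - p.natDegree) := by
  have hpr : (p * derivative r).coeff (p.natDegree + r.natDegree - 1) =
      p.leadingCoeff * r.leadingCoeff * r.natDegree := by
    rw [show p.natDegree + r.natDegree - 1 = p.natDegree + (r.natDegree - 1) by omega,
      coeff_mul_add_eq_of_natDegree_le le_rfl (natDegree_derivative_le r), coeff_derivative,
      Nat.sub_add_cancel (Nat.pos_of_ne_zero hr), Nat.cast_sub (Nat.pos_of_ne_zero hr)]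
    simp only [leadingCoeff, Nat.cast_one, sub_add_cancel, mul_assoc]
  have hrp : (derivative p * r).coeff (p.natDegree + r.natDegree - 1) =
      p.leadingCoeff * r.leadingCoeff * p.natDegree := by
    rw [show p.natDegree + r.natDegree - 1 = (p.natDegree - 1) + r.natDegree by omega,
      coeff_mul_add_eq_of_natDegree_le (natDegree_derivative_le p) le_rfl, coeff_derivative,
      Nat.sub_add_cancel (Nat.pos_of_ne_zero hp), Nat.cast_sub (Nat.pos_of_ne_zero hp)]
    simp only [leadingCoeff, Nat.cast_one, sub_add_cancel]
    ring
  rw [wronskian, coeff_sub, hpr, hrp]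
  ring

theorem natDegree_wronskian_of_natDegree_ne [IsDomain R] [CharZero R] {p r : R[X]}
    (hp : p.natDegree ≠ 0) (hr : r.natDegree ≠ 0) (hpr : p.natDegree ≠ r.natDegree) :
    (wronskian p r).natDegree = p.natDegree + r.natDegree - 1 := by
  have hcoeff : (wronskian p r).coeff (p.natDegree + r.natDegree - 1) ≠ 0 := by
    rw [coeff_wronskian_natDegree_add_sub_one hp hr]
    refine mul_ne_zero (mul_ne_zero ?_ ?_) (sub_ne_zero.mpr ?_)
    · exact leadingCoeff_ne_zero.mpr (ne_zero_of_natDegree_gt (Nat.pos_of_ne_zero hp))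
    · exact leadingCoeff_ne_zero.mpr (ne_zero_of_natDegree_gt (Nat.pos_of_ne_zero hr))
    · exact_mod_cast hpr.symm
  have hlt := natDegree_wronskian_lt_add (fun h => hcoeff (by rw [h, coeff_zero]))
  have hle := le_natDegree_of_ne_zero hcoeff
  omega

theorem derivation_apply_eq_mul_derivative (D : Derivation R R[X] R[X]) (f : R[X]) :
    D f = D X * derivative f := by
  conv_lhs => rw [← (mkDerivationEquiv R).apply_symm_apply D]
  rw [mkDerivationEquiv_apply, mkDerivation_apply, mkDerivationEquiv_symm_apply, smul_eq_mul,
    mul_comm]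

theorem lie_derivation_apply_X (D E : Derivation R R[X] R[X]) :
    ⁅D, E⁆ X = wronskian (D X) (E X) := by
  rw [Derivation.commutator_apply, derivation_apply_eq_mul_derivative D (E X),
    derivation_apply_eq_mul_derivative E (D X), wronskian]
  ring

end Polynomial

namespace Submodule

variable {K : Type*} [Field K] {V : Submodule K K[X]}

theorem finrank_le_one_of_natDegree_eq {n : ℕ} (h : ∀ p ∈ V, p ≠ 0 → p.natDegree = n) :
    finrank K V ≤ 1 := by
  have hinj : Function.Injective ((lcoeff K n).domRestrict V) := by
    rw [← LinearMap.ker_eq_bot, LinearMap.ker_eq_bot']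
    rintro ⟨p, hpV⟩ hp
    refine Subtype.ext (by_contra fun hp0 => leadingCoeff_ne_zero.mpr hp0 ?_)
    rwa [leadingCoeff, h p hpV hp0]
  simpa using LinearMap.finrank_le_finrank_of_injective hinj

theorem exists_forall_natDegree_le [FiniteDimensional K V] :
    ∃ r ∈ V, ∀ p ∈ V, p.natDegree ≤ r.natDegree := by
  obtain ⟨s, hs⟩ := (fg_iff_finiteDimensional V).mpr inferInstance
  obtain ⟨N, hN⟩ := span_le_degreeLE_of_finite (R := K) s.finite_toSet
  rw [hs] at hN
  have hbdd : BddAbove (natDegree '' (V : Set K[X])) := by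
    refine ⟨N, ?_⟩
    rintro _ ⟨p, hp, rfl⟩
    exact natDegree_le_iff_degree_le.mpr (mem_degreeLE.mp (hN hp))
  obtain ⟨r, hrV, hr⟩ := Nat.sSup_mem (Set.Nonempty.image _ ⟨0, V.zero_mem⟩) hbdd
  exact ⟨r, hrV, fun p hp => hr ▸ le_csSup hbdd ⟨p, hp, rfl⟩⟩

theorem exists_natDegree_eq_of_wronskian_mem [CharZero K] [FiniteDimensional K V]
    (hW : ∀ p ∈ V, ∀ r ∈ V, wronskian p r ∈ V) (hdeg : ∀ p ∈ V, p ≠ 0 → 2 ≤ p.natDegree) :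
    ∃ n, ∀ p ∈ V, p ≠ 0 → p.natDegree = n := by
  obtain ⟨r, hrV, hr⟩ := exists_forall_natDegree_le (V := V)
  refine ⟨r.natDegree, fun p hpV hp0 => (hr p hpV).eq_or_lt.resolve_right fun hlt => ?_⟩
  have h2 := hdeg p hpV hp0
  have hdegW := natDegree_wronskian_of_natDegree_ne (by omega) (by omega) hlt.ne
  have hmaxW := hr _ (hW p hpV r hrV)
  omega

end Submodule

theorem finite_dim_subalgebras_deg_ge_two_general
    (K : Type*) [Field K] [CharZero K]
    (q : Polynomial K) (hq : 2 ≤ q.natDegree)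
    (F : LieSubalgebra K (Derivation K (Polynomial K) (Polynomial K)))
    (hFL : (F : Set (Derivation K (Polynomial K) (Polynomial K))) ⊆
      {D | ∃ f : Polynomial K, D = (q * f) • Polynomial.derivative'})
    [FiniteDimensional K F] :
    Module.finrank K F ≤ 1 := by
  set V := F.toSubmodule.map (mkDerivationEquiv K).symm.toLinearMap
  have hW : ∀ p ∈ V, ∀ r ∈ V, wronskian p r ∈ V := by
    rintro _ ⟨D, hD, rfl⟩ _ ⟨E, hE, rfl⟩
    exact ⟨⁅D, E⁆, F.lie_mem hD hE, lie_derivation_apply_X D E⟩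
  have hdeg : ∀ p ∈ V, p ≠ 0 → 2 ≤ p.natDegree := by
    rintro _ ⟨D, hD, rfl⟩ hD0
    obtain ⟨f, rfl⟩ := hFL hD
    have hX : ((q * f) • derivative' : Derivation K K[X] K[X]) X = q * f := by simp
    simp only [LinearEquiv.coe_coe, mkDerivationEquiv_symm_apply, hX] at hD0 ⊢
    rw [natDegree_mul (left_ne_zero_of_mul hD0) (right_ne_zero_of_mul hD0)]
    omega
  obtain ⟨n, hn⟩ := Submodule.exists_natDegree_eq_of_wronskian_mem hW hdeg
  change finrank K F.toSubmodule ≤ 1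
  rw [← LinearEquiv.finrank_map_eq (mkDerivationEquiv K).symm]
  exact Submodule.finrank_le_one_of_natDegree_eq hn

/-- Proposition 3(1): if `deg q ≥ 2`, then every finite-dimensional Lie subalgebra of the
polynomial Lie algebra `L = q(x)·K[x]·∂/∂x ⊆ W₁(K)` has dimension at most one. -/
theorem finite_dim_subalgebras_deg_ge_two
    (K : Type*) [Field K] [IsAlgClosed K] [CharZero K]
    (q : Polynomial K) (hq : 2 ≤ q.natDegree)
    (F : LieSubalgebra K (Derivation K (Polynomial K) (Polynomial K)))
    (hFL : (F : Set (Derivation K (Polynomial K) (Polynomial K))) ⊆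
      {D | ∃ f : Polynomial K, D = (q * f) • Polynomial.derivative'})
    [FiniteDimensional K F] :
    Module.finrank K F ≤ 1 :=
  finite_dim_subalgebras_deg_ge_two_general K q hq F hFL
end

section
/- Let L = q(x)·K[x]·∂/∂x be a polynomial Lie algebra in W₁(K), where q(x) ∈ K[x] has degree 1. Then every finite-dimensional Lie subalgebra of L either has dimension at most one over K or coincides with F_k = span_K( q(x)·∂/∂x, q(x)^k·∂/∂x ) for some integer k ≥ 2. -/
/-!
Writing `q = a x + b`, the substitution `x ↦ a x + b` identifies `q K[x] ∂/∂x` with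
`x K[x] ∂/∂x` and rescales the bracket by `a`, so it suffices to treat subspaces `W ⊆ x K[x]`
closed under the Witt bracket `⟨f, g⟩ = f g' - f' g`. Let `v ∈ W` have maximal degree `n`.
For `g ∈ W` of degree `m ∉ {1, n}` the bracket `⟨g, v⟩` has degree `m + n - 1 > n`, so every
element of `W` without `xⁿ`-term is a multiple of `x`. Hence `dim W ≥ 2` forces `W = span {x, v}`;
then `⟨x, v⟩ - (n - 1) v = c x` and comparing coefficients gives `v ∈ span {x, xⁿ}`.
-/

open Module Polynomial

theorem Submodule.eq_span_pair_of_le {K V : Type*} [Field K] [AddCommGroup V] [Module K V]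
    {W : Submodule K V} {a b : V} (hle : W ≤ span K {a, b}) (hW : 1 < finrank K W) :
    W = span K {a, b} := by
  classical
  have := FiniteDimensional.span_of_finite K (Set.toFinite {a, b})
  refine eq_of_le_of_finrank_le hle ((finrank_span_le_card _).trans ?_)
  simp only [Set.toFinset_insert, Set.toFinset_singleton]
  exact (Finset.card_insert_le _ _).trans hW

namespace Polynomial

section WittBracket

variable {R : Type*} [CommRing R]

noncomputable def wittBracket (a b : R[X]) : R[X] := a * derivative b - derivative a * b

theorem lie_smul_derivative' (a b : R[X]) :
    ⁅a • derivative' (R := R), b • derivative' (R := R)⁆ =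
      wittBracket a b • derivative' := by
  apply derivation_ext
  simp only [Derivation.commutator_apply, Derivation.coe_smul, Pi.smul_apply, derivative'_apply,
    derivative_X, smul_eq_mul, mul_one, wittBracket]
  ring

theorem wittBracket_comp (a b p : R[X]) :
    wittBracket (a.comp p) (b.comp p) = derivative p * (wittBracket a b).comp p := by
  simp only [wittBracket, derivative_comp, sub_comp, mul_comp]
  ring

theorem coeff_X_mul_derivative (p : R[X]) (n : ℕ) :
    (X * derivative p).coeff n = n * p.coeff n := by
  cases n with
  | zero => simp
  | succ n => rw [coeff_X_mul, coeff_derivative]; push_cast; ring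

variable [IsDomain R] [CharZero R]

theorem coeff_wittBracket_natDegree_add_sub_one {a b : R[X]} (ha : a.natDegree ≠ 0)
    (hb : b.natDegree ≠ 0) :
    (wittBracket a b).coeff (a.natDegree + b.natDegree - 1) =
      (b.natDegree - a.natDegree) * a.leadingCoeff * b.leadingCoeff := by
  have h₁ : a.natDegree + b.natDegree - 1 = a.natDegree + (derivative b).natDegree := by
    rw [natDegree_derivative]; omega
  have h₂ : a.natDegree + b.natDegree - 1 = (derivative a).natDegree + b.natDegree := by
    rw [natDegree_derivative]; omega
  rw [wittBracket, coeff_sub]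
  nth_rw 1 [h₁]
  rw [h₂, coeff_mul_degree_add_degree, coeff_mul_degree_add_degree, leadingCoeff_derivative,
    leadingCoeff_derivative]
  ring

theorem natDegree_wittBracket {a b : R[X]} (ha : a.natDegree ≠ 0) (hb : b.natDegree ≠ 0)
    (hab : a.natDegree ≠ b.natDegree) :
    (wittBracket a b).natDegree = a.natDegree + b.natDegree - 1 := by
  refine le_antisymm ((natDegree_sub_le _ _).trans (max_le ?_ ?_)) (le_natDegree_of_ne_zero ?_)
  · exact natDegree_mul_le.trans (by rw [natDegree_derivative]; omega)
  · exact natDegree_mul_le.trans (by rw [natDegree_derivative]; omega)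
  · rw [coeff_wittBracket_natDegree_add_sub_one ha hb]
    have hdeg : (b.natDegree : R) - a.natDegree ≠ 0 := sub_ne_zero.2 (by exact_mod_cast hab.symm)
    have ha0 : a ≠ 0 := by rintro rfl; simp at ha
    have hb0 : b ≠ 0 := by rintro rfl; simp at hb
    simp [hdeg, ha0, hb0]

end WittBracket

theorem exists_mem_forall_natDegree_le {K : Type*} [Field K] (W : Submodule K K[X])
    [FiniteDimensional K W] : ∃ v ∈ W, ∀ f ∈ W, f.natDegree ≤ v.natDegree := by
  obtain ⟨s, hs⟩ := (Submodule.fg_iff_finiteDimensional W).mpr ‹_›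
  have hle : W ≤ degreeLE K (s.sup natDegree : ℕ) := by
    rw [← hs, Submodule.span_le]
    intro p hp
    exact mem_degreeLE.2 (degree_le_of_natDegree_le (Finset.le_sup hp))
  have hbdd : BddAbove (natDegree '' (W : Set K[X])) := by
    refine ⟨s.sup natDegree, ?_⟩
    rintro _ ⟨f, hf, rfl⟩
    exact natDegree_le_of_degree_le (mem_degreeLE.1 (hle hf))
  obtain ⟨v, hv, hvn⟩ := Nat.sSup_mem (Set.Nonempty.image _ ⟨0, W.zero_mem⟩) hbdd
  exact ⟨v, hv, fun f hf => hvn ▸ le_csSup hbdd ⟨f, hf, rfl⟩⟩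

section MaximalDegree

variable {K : Type*} [Field K] [CharZero K] {W : Submodule K K[X]}
  (hdvd : ∀ f ∈ W, X ∣ f) (hbr : ∀ a ∈ W, ∀ b ∈ W, wittBracket a b ∈ W)
  {v : K[X]} (hv : v ∈ W) (hmax : ∀ f ∈ W, f.natDegree ≤ v.natDegree)
include hdvd hbr hv hmax

theorem eq_C_mul_X_of_coeff_natDegree_eq_zero {g : K[X]} (hg : g ∈ W)
    (hgv : g.coeff v.natDegree = 0) : g = C (g.coeff 1) * X := by
  by_cases hg0 : g = 0
  · simp [hg0]
  have hg1 : 1 ≤ g.natDegree := by simpa using natDegree_le_of_dvd (hdvd g hg) hg0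
  have hlt : g.natDegree < v.natDegree := (hmax g hg).lt_of_ne fun h =>
    hg0 (leadingCoeff_eq_zero.1 (by rwa [leadingCoeff, h]))
  have hle := hmax _ (hbr g hg v hv)
  rw [natDegree_wittBracket (by omega) (by omega) hlt.ne] at hle
  have h0 : g.coeff 0 = 0 := X_dvd_iff.1 (hdvd g hg)
  conv_lhs => rw [eq_X_add_C_of_natDegree_le_one (by omega : g.natDegree ≤ 1), h0, C_0, add_zero]

theorem le_span_X_pair (hv0 : v ≠ 0) : W ≤ Submodule.span K {X, v} := by
  intro f hf
  set d := f.coeff v.natDegree / v.leadingCoeff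
  have hg := eq_C_mul_X_of_coeff_natDegree_eq_zero hdvd hbr hv hmax
    (W.sub_mem hf (W.smul_mem d hv)) (by simp [d, leadingCoeff_ne_zero.2 hv0])
  rw [← sub_add_cancel f (d • v), hg, ← smul_eq_C_mul]
  exact add_mem (Submodule.smul_mem _ _ (Submodule.subset_span (by simp)))
    (Submodule.smul_mem _ _ (Submodule.subset_span (by simp)))

theorem mem_span_X_X_pow_natDegree (hX : X ∈ W) :
    v ∈ Submodule.span K {X, X ^ v.natDegree} := by
  set n := v.natDegree
  have hg := eq_C_mul_X_of_coeff_natDegree_eq_zero hdvd hbr hv hmax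
    (W.sub_mem (hbr X hX v hv) (W.smul_mem ((n : K) - 1) hv))
    (by
      simp only [wittBracket, derivative_X, one_mul, coeff_sub, coeff_X_mul_derivative,
        coeff_smul, smul_eq_mul]
      ring)
  have hcoeff (j : ℕ) (hj : j ≠ 1) : ((j : K) - n) * v.coeff j = 0 := by
    have := congrArg (coeff · j) hg
    simp only [wittBracket, coeff_sub, coeff_smul, derivative_X, one_mul, coeff_X_mul_derivative,
      coeff_C_mul_X, hj, if_false, smul_eq_mul] at this
    linear_combination this
  rw [v.as_sum_support]
  refine Submodule.sum_mem _ fun j hj => ?_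
  rw [← C_mul_X_pow_eq_monomial, ← smul_eq_C_mul]
  refine Submodule.smul_mem _ _ (Submodule.subset_span ?_)
  by_cases hj1 : j = 1
  · simp [hj1]
  · have hjn : (j : K) - n = 0 :=
      (mul_eq_zero.1 (hcoeff j hj1)).resolve_right (mem_support_iff.1 hj)
    simp [Nat.cast_inj.1 (sub_eq_zero.1 hjn)]

end MaximalDegree

theorem finrank_le_one_or_eq_span_X_X_pow {K : Type*} [Field K] [CharZero K]
    (W : Submodule K K[X]) [FiniteDimensional K W] (hdvd : ∀ f ∈ W, X ∣ f)
    (hbr : ∀ a ∈ W, ∀ b ∈ W, wittBracket a b ∈ W) :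
    finrank K W ≤ 1 ∨ ∃ k, 2 ≤ k ∧ W = Submodule.span K {X, X ^ k} := by
  refine or_iff_not_imp_left.2 fun hW => ?_
  rw [not_le] at hW
  obtain ⟨v, hv, hmax⟩ := exists_mem_forall_natDegree_le W
  have hv0 : v ≠ 0 := by
    obtain ⟨f, hf, hf0⟩ := Submodule.exists_mem_ne_zero_of_ne_bot
      (Submodule.one_le_finrank_iff.1 hW.le)
    rintro rfl
    simpa using (natDegree_le_of_dvd (hdvd f hf) hf0).trans (hmax f hf)
  have hWv := Submodule.eq_span_pair_of_le (le_span_X_pair hdvd hbr hv hmax hv0) hW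
  have hX : X ∈ W := hWv ▸ Submodule.subset_span (by simp)
  have hWn := Submodule.eq_span_pair_of_le (hWv.le.trans (Submodule.span_le.2
    (Set.insert_subset (Submodule.subset_span (by simp))
      (Set.singleton_subset_iff.2 (mem_span_X_X_pow_natDegree hdvd hbr hv hmax hX))))) hW
  refine ⟨v.natDegree, ?_, hWn⟩
  have hn1 : 1 ≤ v.natDegree := by simpa using hmax X hX
  refine Nat.lt_of_le_of_ne hn1 fun hn => hW.ne ?_
  rw [hWn, ← hn, pow_one, Set.pair_eq_singleton, finrank_span_singleton X_ne_zero]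

section AffineChange

variable {R : Type*} [CommRing R] (a b : R) [Invertible a]

noncomputable def affineVectorField : R[X] ≃ₗ[R] Derivation R R[X] R[X] :=
  (algEquivCMulXAddC a b).toLinearEquiv.trans (mkDerivationEquiv R)

theorem affineVectorField_apply (p : R[X]) :
    affineVectorField a b p = p.comp (C a * X + C b) • derivative' := by
  apply derivation_ext
  simp [affineVectorField, comp_eq_aeval]

theorem lie_affineVectorField (f g : R[X]) :
    ⁅affineVectorField a b f, affineVectorField a b g⁆ =
      a • affineVectorField a b (wittBracket f g) := by
  simp only [affineVectorField_apply, lie_smul_derivative', wittBracket_comp, derivative_add,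
    derivative_C_mul_X, derivative_C, add_zero]
  rw [← smul_eq_C_mul, smul_assoc]

variable {a b} in
theorem X_dvd_of_affineVectorField_eq {f g : R[X]}
    (h : affineVectorField a b f = ((C a * X + C b) * g) • derivative') : X ∣ f := by
  set σ := algEquivCMulXAddC a b
  have hσ : σ f = σ (X * σ.symm g) := by
    rw [map_mul, σ.apply_symm_apply, algEquivCMulXAddC_apply, algEquivCMulXAddC_apply, aeval_X,
      ← comp_eq_aeval]
    simpa [affineVectorField_apply] using congrArg (· X) h
  exact ⟨_, σ.injective hσ⟩

end AffineChange

end Polynomial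

theorem finite_dim_subalgebras_deg_one_general
    (K : Type*) [Field K] [CharZero K]
    (q : Polynomial K) (hq : q.natDegree = 1)
    (F : LieSubalgebra K (Derivation K (Polynomial K) (Polynomial K)))
    (hFL : (F : Set (Derivation K (Polynomial K) (Polynomial K))) ⊆
      {D | ∃ f : Polynomial K, D = (q * f) • Polynomial.derivative'})
    [FiniteDimensional K F] :
    Module.finrank K F ≤ 1 ∨
    ∃ k : ℕ, 2 ≤ k ∧
      (F : Set (Derivation K (Polynomial K) (Polynomial K))) =
        (Submodule.span K {q • (Polynomial.derivative' :
            Derivation K (Polynomial K) (Polynomial K)),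
          (q ^ k) • (Polynomial.derivative' :
            Derivation K (Polynomial K) (Polynomial K))} :
          Set (Derivation K (Polynomial K) (Polynomial K))) := by
  obtain ⟨a, ha, b, rfl⟩ := natDegree_eq_one.mp hq
  have := invertibleOfNonzero ha
  set ψ := affineVectorField a b
  set W := F.toSubmodule.map ψ.symm.toLinearMap
  have hW (f : K[X]) : f ∈ W ↔ ψ f ∈ F := by simp [W, Submodule.mem_map_equiv]
  let eFW := ψ.symm.submoduleMap F.toSubmodule
  have : FiniteDimensional K W := eFW.finiteDimensional
  have hdvd (f : K[X]) (hf : f ∈ W) : X ∣ f := by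
    obtain ⟨g, hg⟩ := hFL ((hW f).1 hf)
    exact X_dvd_of_affineVectorField_eq hg
  have hbr (f : K[X]) (hf : f ∈ W) (g : K[X]) (hg : g ∈ W) : wittBracket f g ∈ W := by
    have hfg := F.lie_mem ((hW f).1 hf) ((hW g).1 hg)
    rw [lie_affineVectorField, ← map_smul] at hfg
    simpa [ha] using W.smul_mem a⁻¹ ((hW _).2 hfg)
  rcases finrank_le_one_or_eq_span_X_X_pow W hdvd hbr with h | ⟨k, hk, hWk⟩
  · exact Or.inl (eFW.finrank_eq ▸ h)
  · refine Or.inr ⟨k, hk, ?_⟩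
    rw [← LieSubalgebra.coe_toSubmodule, ← (Submodule.map_symm_eq_iff ψ (p := W)).1 rfl, hWk,
      Submodule.map_span, Set.image_pair]
    simp [ψ, affineVectorField_apply]

/-- Proposition 3(2): if `deg q = 1`, then every finite-dimensional Lie subalgebra of the
polynomial Lie algebra `L = q(x)·K[x]·∂/∂x ⊆ W₁(K)` is at most one-dimensional or
coincides with `F_k = ⟨q·∂/∂x, q^k·∂/∂x⟩` for some `k ≥ 2`. -/
theorem finite_dim_subalgebras_deg_one
    (K : Type*) [Field K] [IsAlgClosed K] [CharZero K]
    (q : Polynomial K) (hq : q.natDegree = 1)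
    (F : LieSubalgebra K (Derivation K (Polynomial K) (Polynomial K)))
    (hFL : (F : Set (Derivation K (Polynomial K) (Polynomial K))) ⊆
      {D | ∃ f : Polynomial K, D = (q * f) • Polynomial.derivative'})
    [FiniteDimensional K F] :
    Module.finrank K F ≤ 1 ∨
    ∃ k : ℕ, 2 ≤ k ∧
      (F : Set (Derivation K (Polynomial K) (Polynomial K))) =
        (Submodule.span K {q • (Polynomial.derivative' :
            Derivation K (Polynomial K) (Polynomial K)),
          (q ^ k) • (Polynomial.derivative' :
            Derivation K (Polynomial K) (Polynomial K))} :
          Set (Derivation K (Polynomial K) (Polynomial K))) :=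
  finite_dim_subalgebras_deg_one_general K q hq F hFL
end

section
/- Let f, g ∈ K[x] be polynomials with g ≠ 0 satisfying f·g′ − f′·g = g, and suppose deg f = 1. Then there exist c ∈ K and a natural number k with k ≠ 1 such that g = c·f^k. -/
/-!
Since `f` has degree one, `f′` is a constant `a`, and the relation reads `f·g′ = (a + 1)·g`.
Any solution of `f·g′ = b·g` of positive degree is divisible by `f`, and the quotient solves
the same equation with `b - a` in place of `b`; peeling off factors of `f` gives
`g = c·f ^ deg g`. Finally `deg g = 1` is impossible: for `g = c·f` the left-hand side
`f·g′ − f′·g` vanishes, so `g = 0`.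
-/

open Polynomial

namespace Polynomial

variable {K : Type*} [Field K] {f g : K[X]} {b : K}

theorem derivative_eq_C_coeff_one_of_natDegree_le_one (hf : f.natDegree ≤ 1) :
    derivative f = C (f.coeff 1) := by
  rw [eq_X_add_C_of_natDegree_le_one hf]
  simp

theorem dvd_of_mul_derivative_eq_C_mul [CharZero K] (hf : f ≠ 0) (hg : g.natDegree ≠ 0)
    (h : f * derivative g = C b * g) : f ∣ g := by
  have hb : b ≠ 0 := by
    rintro rfl
    rw [C_0, zero_mul, mul_eq_zero] at h
    exact h.elim hf (derivative_ne_zero.mpr hg)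
  exact (isUnit_C.mpr hb.isUnit).dvd_mul_left.mp ⟨derivative g, h.symm⟩

theorem mul_derivative_eq_C_sub_coeff_one_mul (hf : f.natDegree = 1)
    {q : K[X]} (h : f * derivative (f * q) = C b * (f * q)) :
    f * derivative q = C (b - f.coeff 1) * q := by
  have hf0 : f ≠ 0 := ne_zero_of_natDegree_gt (hf ▸ one_pos)
  rw [derivative_mul, derivative_eq_C_coeff_one_of_natDegree_le_one hf.le] at h
  apply mul_left_cancel₀ hf0
  rw [C_sub]
  linear_combination h

theorem exists_eq_C_mul_pow_natDegree_of_mul_derivative_eq_C_mul [CharZero K]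
    (hf : f.natDegree = 1) (h : f * derivative g = C b * g) :
    ∃ c, g = C c * f ^ g.natDegree := by
  have hf0 : f ≠ 0 := ne_zero_of_natDegree_gt (hf ▸ one_pos)
  induction hn : g.natDegree generalizing g b with
  | zero => exact ⟨g.coeff 0, by simpa using eq_C_of_natDegree_eq_zero hn⟩
  | succ n ih =>
    obtain ⟨q, rfl⟩ := dvd_of_mul_derivative_eq_C_mul hf0 (hn ▸ n.succ_ne_zero) h
    have hq : q.natDegree = n := by
      have hq0 : q ≠ 0 := by rintro rfl; simp at hn
      rw [natDegree_mul hf0 hq0, hf] at hn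
      omega
    obtain ⟨c, hc⟩ := ih (mul_derivative_eq_C_sub_coeff_one_mul hf h) hq
    exact ⟨c, by rw [hc]; ring⟩

end Polynomial

theorem g_proportional_to_power_of_f_general
    (K : Type*) [Field K] [CharZero K]
    (f g : Polynomial K)
    (hrel : f * Polynomial.derivative g - Polynomial.derivative f * g = g)
    (hdeg : f.natDegree = 1) :
    ∃ (c : K) (k : ℕ), k ≠ 1 ∧ g = Polynomial.C c * f ^ k := by
  have hf' := derivative_eq_C_coeff_one_of_natDegree_le_one hdeg.le
  have heq : f * derivative g = C (f.coeff 1 + 1) * g := by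
    rw [C_add, C_1, ← hf']
    linear_combination hrel
  obtain ⟨c, hc⟩ := exists_eq_C_mul_pow_natDegree_of_mul_derivative_eq_C_mul hdeg heq
  refine ⟨c, g.natDegree, fun hg1 => ?_, hc⟩
  have hg0 : g = 0 := by
    rw [hg1, pow_one] at hc
    rw [hc, derivative_C_mul] at hrel
    rw [hc, ← hrel]
    ring
  simp [hg0] at hg1

/-- In the proof of Proposition 3: if `f·g′ − f′·g = g` with `g ≠ 0` and `deg f = 1`,
then `g` is proportional to `f^k` for some `k ≠ 1`. -/
theorem g_proportional_to_power_of_f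
    (K : Type*) [Field K] [IsAlgClosed K] [CharZero K]
    (f g : Polynomial K) (hg : g ≠ 0)
    (hrel : f * Polynomial.derivative g - Polynomial.derivative f * g = g)
    (hdeg : f.natDegree = 1) :
    ∃ (c : K) (k : ℕ), k ≠ 1 ∧ g = Polynomial.C c * f ^ k :=
  g_proportional_to_power_of_f_general K f g hrel hdeg
end
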